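/- arXiv:2407.13002 — 2 statements merged into one kernel-verified Lean document; each statement's English description precedes it below -/
import Mathlib

section
/- Let μ, ν ∈ 𝓜 with μ(ℝ) = ν(ℝ) and min(p_{μ,ν}, c_{μ,ν}) > 0. Let T⁻ : ℝ → ℝ and T⁺ : ℝ → ℝ be non-decreasing 1-Lipschitz maps such that x ≤ T⁻(x) ≤ x⁻ for all x < x⁻, x⁺ ≤ T⁺(x) ≤ x for all x > x⁺, the push-forward of η⁻ under T⁻ satisfies T⁻(η⁻) ≤_c χ⁻, and the push-forward of η⁺ under T⁺ satisfies T⁺(η⁺) ≤_c χ⁺. Define T̂(x) := T⁻(x) for x < x⁻, T̂(x) := x for x⁻ ≤ x ≤ x⁺, and T̂(x) := T⁺(x) for x > x⁺. Then T̂ is non-decreasing, 1-Lipschitz, and the push-forward T̂(μ) satisfies T̂(μ) ≤_c ν. -/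
open MeasureTheory Set Filter

noncomputable section

/-- Total mass of a measure on ℝ, as a real number. -/
def mass (η : Measure ℝ) : ℝ := (η univ).toReal

/-- Mean (first moment) of a measure on ℝ. -/
def mean (η : Measure ℝ) : ℝ := ∫ x, x ∂η

/-- `η ∈ 𝓜`: finite Borel measure on ℝ with finite first moment. -/
def MemM (η : Measure ℝ) : Prop := IsFiniteMeasure η ∧ Integrable (fun x => x) η

/-- Put potential `P_η(k) = ∫ (k-x)⁺ dη`. -/
def Pput (η : Measure ℝ) (k : ℝ) : ℝ := ∫ x, max (k - x) 0 ∂η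

/-- Call potential `C_η(k) = ∫ (x-k)⁺ dη`. -/
def Ccall (η : Measure ℝ) (k : ℝ) : ℝ := ∫ x, max (x - k) 0 ∂η

/-- `p_{μ,ν} = sup_k (P_μ(k) - P_ν(k))`. -/
def pconst (μ ν : Measure ℝ) : ℝ := ⨆ k : ℝ, (Pput μ k - Pput ν k)

/-- `c_{μ,ν} = sup_k (C_μ(k) - C_ν(k))`. -/
def cconst (μ ν : Measure ℝ) : ℝ := ⨆ k : ℝ, (Ccall μ k - Ccall ν k)

/-- `π ∈ Π(μ,ν)`: coupling with marginals μ and ν. -/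
def IsCoupling (μ ν : Measure ℝ) (π : Measure (ℝ × ℝ)) : Prop :=
  π.fst = μ ∧ π.snd = ν

open Classical in
/-- Barycenter `π̄_x = ∫ y π_x(dy)` of the disintegration of π at x. -/
def bar (π : Measure (ℝ × ℝ)) (x : ℝ) : ℝ :=
  if h : IsFiniteMeasure π then
    haveI := h
    ∫ y, y ∂(π.condKernel x)
  else 0

/-- Weak `L¹` transport cost `∫ |x - π̄_x| μ(dx)`. -/
def WOTcost (μ : Measure ℝ) (π : Measure (ℝ × ℝ)) : ℝ := ∫ x, |x - bar π x| ∂μ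

/-- `V(μ,ν) = inf over couplings of the weak L¹ cost`. -/
def V (μ ν : Measure ℝ) : ℝ :=
  sInf {r | ∃ π, IsCoupling μ ν π ∧ r = WOTcost μ π}

/-- Martingale couplings. -/
def IsMartCoupling (μ ν : Measure ℝ) (π : Measure (ℝ × ℝ)) : Prop :=
  IsCoupling μ ν π ∧ ∀ᵐ x ∂μ, bar π x = x

/-- Supermartingale couplings. -/
def IsSupCoupling (μ ν : Measure ℝ) (π : Measure (ℝ × ℝ)) : Prop :=
  IsCoupling μ ν π ∧ ∀ᵐ x ∂μ, bar π x ≤ x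

/-- Submartingale couplings. -/
def IsSubCoupling (μ ν : Measure ℝ) (π : Measure (ℝ × ℝ)) : Prop :=
  IsCoupling μ ν π ∧ ∀ᵐ x ∂μ, x ≤ bar π x

/-- `x⁻ = inf {k : P_ν(k) + p_{μ,ν} = P_μ(k)}`. -/
def xminus (μ ν : Measure ℝ) : ℝ := sInf {k | Pput ν k + pconst μ ν = Pput μ k}

/-- `x⁺ = sup {k : P_ν(k) + p_{μ,ν} = P_μ(k)}`. -/
def xplus (μ ν : Measure ℝ) : ℝ := sSup {k | Pput ν k + pconst μ ν = Pput μ k}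

/-- Left derivative. -/
def leftD (f : ℝ → ℝ) (x : ℝ) : ℝ := derivWithin f (Iio x) x

/-- Right derivative. -/
def rightD (f : ℝ → ℝ) (x : ℝ) : ℝ := derivWithin f (Ioi x) x

/-- `η⁻ = μ|_{(-∞,x⁻)}`. -/
def etaMinus (μ ν : Measure ℝ) : Measure ℝ := μ.restrict (Iio (xminus μ ν))

/-- `η⁰ = μ|_{[x⁻,x⁺]}`. -/
def etaZero (μ ν : Measure ℝ) : Measure ℝ := μ.restrict (Icc (xminus μ ν) (xplus μ ν))

/-- `η⁺ = μ|_{(x⁺,∞)}`. -/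
def etaPlus (μ ν : Measure ℝ) : Measure ℝ := μ.restrict (Ioi (xplus μ ν))

/-- `χ⁻ = ν|_{(-∞,x⁻)} + (Δ⁻ - P_ν'(x⁻-)) δ_{x⁻}`. -/
def chiMinus (μ ν : Measure ℝ) : Measure ℝ :=
  ν.restrict (Iio (xminus μ ν)) +
    (ENNReal.ofReal (leftD (Pput μ) (xminus μ ν) - leftD (Pput ν) (xminus μ ν))) •
      Measure.dirac (xminus μ ν)

/-- `χ⁺ = ν|_{(x⁺,∞)} + (Δ⁺ - P_ν'(x⁺+)) δ_{x⁺}`. -/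
def chiPlus (μ ν : Measure ℝ) : Measure ℝ :=
  ν.restrict (Ioi (xplus μ ν)) +
    (ENNReal.ofReal (rightD (Pput μ) (xplus μ ν) - rightD (Pput ν) (xplus μ ν))) •
      Measure.dirac (xplus μ ν)

/-- `χ⁰ = ν - χ⁻ - χ⁺`. -/
def chiZero (μ ν : Measure ℝ) : Measure ℝ := ν - chiMinus μ ν - chiPlus μ ν

/-- `Π*(μ,ν)`: couplings of the form sub + martingale + super on the decomposition. -/
def PiStar (μ ν : Measure ℝ) : Set (Measure (ℝ × ℝ)) :=
  {π | IsCoupling μ ν π ∧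
    ∃ πm π0 πp : Measure (ℝ × ℝ),
      π = πm + π0 + πp ∧
      IsSubCoupling (etaMinus μ ν) (chiMinus μ ν) πm ∧
      IsMartCoupling (etaZero μ ν) (chiZero μ ν) π0 ∧
      IsSupCoupling (etaPlus μ ν) (chiPlus μ ν) πp}

/-- Convex order `η ≤_c χ`. -/
def CxOrder (η χ : Measure ℝ) : Prop :=
  ∀ f : ℝ → ℝ, ConvexOn ℝ univ f → Integrable f η → Integrable f χ →
    ∫ x, f x ∂η ≤ ∫ x, f x ∂χ

/-- Convex decreasing order `η ≤_cd χ`. -/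
def CdOrder (η χ : Measure ℝ) : Prop :=
  ∀ f : ℝ → ℝ, ConvexOn ℝ univ f → Antitone f → Integrable f η → Integrable f χ →
    ∫ x, f x ∂η ≤ ∫ x, f x ∂χ

/-- Convex increasing order `η ≤_ci χ`. -/
def CiOrder (η χ : Measure ℝ) : Prop :=
  ∀ f : ℝ → ℝ, ConvexOn ℝ univ f → Monotone f → Integrable f η → Integrable f χ →
    ∫ x, f x ∂η ≤ ∫ x, f x ∂χ

/-- Convex hull (largest convex minorant) of a function. -/
def convHullFn (f : ℝ → ℝ) : ℝ → ℝ :=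
  fun x => sSup {v : ℝ | ∃ g : ℝ → ℝ, ConvexOn ℝ univ g ∧ (∀ y, g y ≤ f y) ∧ v = g x}

/-- `S` is the generalized shadow measure of μ in ν, characterized by its put potential. -/
def IsShadow (μ ν S : Measure ℝ) : Prop :=
  MemM S ∧
    ∀ k, Pput S k = Pput ν k - convHullFn (fun t => Pput ν t - Pput μ t) k - pconst μ ν

/-- `𝒯_{μ,ν}`: possible target laws of μ in ν. -/
def TargetSet (μ ν : Measure ℝ) : Set (Measure ℝ) :=
  {θ | MemM θ ∧ mass θ = mass μ ∧ θ ≤ ν}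


namespace Aux16
open Topology

lemma abs_pos_part_le (a b : ℝ) : |max (a - b) 0| ≤ |a| + |b| := by
  rw [abs_of_nonneg (le_max_right _ _)]
  rcases le_or_gt (a - b) 0 with h | h
  · simp [max_eq_right h, abs_nonneg, add_nonneg, abs_nonneg a, abs_nonneg b]
  · rw [max_eq_left h.le]
    have h1 := le_abs_self a
    have h2 := neg_abs_le b
    linarith

lemma integrable_put (η : Measure ℝ) (hη : MemM η) (k : ℝ) :
    Integrable (fun x => max (k - x) 0) η := by
  haveI := hη.1
  refine Integrable.mono' ((integrable_const |k|).add hη.2.abs) ?_ ?_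
  · exact (Continuous.max (by continuity) continuous_const).aestronglyMeasurable
  · refine Filter.Eventually.of_forall fun x => ?_
    simpa [Real.norm_eq_abs] using abs_pos_part_le k x

lemma integrable_call (η : Measure ℝ) (hη : MemM η) (k : ℝ) :
    Integrable (fun x => max (x - k) 0) η := by
  haveI := hη.1
  refine Integrable.mono' ((integrable_const |k|).add hη.2.abs) ?_ ?_
  · exact (Continuous.max (by continuity) continuous_const).aestronglyMeasurable
  · refine Filter.Eventually.of_forall fun x => ?_
    have := abs_pos_part_le x k
    simpa [Real.norm_eq_abs, add_comm] using this

lemma pput_eq_ccall (η : Measure ℝ) (hη : MemM η) (k : ℝ) :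
    Pput η k = Ccall η k + k * mass η - mean η := by
  haveI := hη.1
  have h1 : ∀ x : ℝ, max (k - x) 0 = max (x - k) 0 + (k - x) := by
    intro x
    rcases le_total x k with h | h
    · rw [max_eq_left (by linarith), max_eq_right (by linarith)]; ring
    · rw [max_eq_right (by linarith), max_eq_left (by linarith)]; ring
  have h2 : Integrable (fun x => k - x) η := (integrable_const k).sub hη.2
  calc Pput η k = ∫ x, (max (x - k) 0 + (k - x)) ∂η := by
        unfold Pput; exact integral_congr_ae (Filter.Eventually.of_forall h1)
    _ = Ccall η k + ∫ x, (k - x) ∂η := integral_add (integrable_call η hη k) h2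
    _ = Ccall η k + (k * mass η - mean η) := by
        rw [integral_sub (integrable_const k) hη.2]
        simp [mass, mean, mul_comm, measureReal_def]
    _ = _ := by ring

lemma continuous_pput (η : Measure ℝ) (hη : MemM η) : Continuous (Pput η) := by
  haveI := hη.1
  have key : ∀ a b : ℝ, |Pput η a - Pput η b| ≤ mass η * |a - b| := by
    intro a b
    have h1 : Pput η a - Pput η b = ∫ x, (max (a - x) 0 - max (b - x) 0) ∂η :=
      (integral_sub (integrable_put η hη a) (integrable_put η hη b)).symm
    rw [h1]
    calc |∫ x, (max (a - x) 0 - max (b - x) 0) ∂η|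
        ≤ ∫ x, |max (a - x) 0 - max (b - x) 0| ∂η := by
          simpa [Real.norm_eq_abs] using
            norm_integral_le_integral_norm (fun x => max (a - x) 0 - max (b - x) 0) (μ := η)
      _ ≤ ∫ _x, |a - b| ∂η := by
          refine integral_mono_of_nonneg (Filter.Eventually.of_forall fun x => abs_nonneg _)
            (integrable_const _) (Filter.Eventually.of_forall fun x => ?_)
          have := abs_max_sub_max_le_abs (a - x) (b - x) 0
          simpa using this
      _ = mass η * |a - b| := by simp [mass, mul_comm, measureReal_def]
  rcases le_or_gt (mass η) 0 with h | h
  · have hab : ∀ a b : ℝ, Pput η a = Pput η b := by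
      intro a b
      have hk := key a b
      have h2 : mass η * |a - b| ≤ 0 := mul_nonpos_of_nonpos_of_nonneg h (abs_nonneg _)
      have h3 : |Pput η a - Pput η b| = 0 := le_antisymm (by linarith) (abs_nonneg _)
      linarith [sub_eq_zero.mp (abs_eq_zero.mp h3)]
    have heq : Pput η = fun _ => Pput η 0 := funext fun a => hab a 0
    rw [heq]; exact continuous_const
  · exact (LipschitzWith.of_dist_le_mul (K := ⟨mass η, h.le⟩) fun a b => by
      rw [Real.dist_eq, Real.dist_eq]; exact key a b).continuous

end Aux16
namespace Aux16
open Topology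

lemma tendsto_pput_atBot (η : Measure ℝ) (hη : MemM η) :
    Tendsto (Pput η) atBot (𝓝 0) := by
  haveI := hη.1
  have h0 : (0 : ℝ) = ∫ (_x : ℝ), (0:ℝ) ∂η := by simp
  rw [h0]
  refine tendsto_integral_filter_of_dominated_convergence (fun x => |x|) ?_ ?_ hη.2.abs ?_
  · exact Filter.Eventually.of_forall fun k =>
      (Continuous.max (by continuity) continuous_const).aestronglyMeasurable
  · filter_upwards [eventually_le_atBot (0:ℝ)] with k hk
    refine Filter.Eventually.of_forall fun x => ?_
    rw [Real.norm_eq_abs, abs_of_nonneg (le_max_right _ _)]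
    rcases le_or_gt (k - x) 0 with h | h
    · simp [max_eq_right h, abs_nonneg]
    · rw [max_eq_left h.le]
      have hx : x < 0 := by linarith
      rw [abs_of_neg hx]; linarith
  · refine Filter.Eventually.of_forall fun x => ?_
    have : ∀ᶠ k in atBot, max (k - x) (0:ℝ) = 0 := by
      filter_upwards [eventually_le_atBot x] with k hk
      exact max_eq_right (by linarith)
    exact Tendsto.congr' (this.mono fun k hk => hk.symm) tendsto_const_nhds

lemma tendsto_ccall_atTop (η : Measure ℝ) (hη : MemM η) :
    Tendsto (Ccall η) atTop (𝓝 0) := by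
  haveI := hη.1
  have h0 : (0 : ℝ) = ∫ (_x : ℝ), (0:ℝ) ∂η := by simp
  rw [h0]
  refine tendsto_integral_filter_of_dominated_convergence (fun x => |x|) ?_ ?_ hη.2.abs ?_
  · exact Filter.Eventually.of_forall fun k =>
      (Continuous.max (by continuity) continuous_const).aestronglyMeasurable
  · filter_upwards [eventually_ge_atTop (0:ℝ)] with k hk
    refine Filter.Eventually.of_forall fun x => ?_
    rw [Real.norm_eq_abs, abs_of_nonneg (le_max_right _ _)]
    rcases le_or_gt (x - k) 0 with h | h
    · simp [max_eq_right h, abs_nonneg]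
    · rw [max_eq_left h.le]
      have hx : 0 < x := by linarith
      rw [abs_of_nonneg hx.le]; linarith
  · refine Filter.Eventually.of_forall fun x => ?_
    have : ∀ᶠ k in atTop, max (x - k) (0:ℝ) = 0 := by
      filter_upwards [eventually_ge_atTop x] with k hk
      exact max_eq_right (by linarith)
    exact Tendsto.congr' (this.mono fun k hk => hk.symm) tendsto_const_nhds

end Aux16
namespace Aux16
open Topology

lemma bddAbove_of_pos_iSup {f : ℝ → ℝ} (h : 0 < ⨆ k, f k) : BddAbove (range f) := by
  by_contra hb
  rw [Real.iSup_of_not_bddAbove hb] at h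
  exact lt_irrefl _ h

lemma partA (μ ν : Measure ℝ) (hμ : MemM μ) (hν : MemM ν) (hmass : mass μ = mass ν)
    (hp : 0 < pconst μ ν) (hc : 0 < cconst μ ν) :
    (Pput ν (xminus μ ν) + pconst μ ν = Pput μ (xminus μ ν)) ∧
    (Pput ν (xplus μ ν) + pconst μ ν = Pput μ (xplus μ ν)) ∧
    xminus μ ν ≤ xplus μ ν ∧
    (∀ k, Pput μ k - Pput ν k ≤ pconst μ ν) ∧
    cconst μ ν = pconst μ ν - (mean ν - mean μ) := by
  set g : ℝ → ℝ := fun k => Pput μ k - Pput ν k with hgdef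
  set L : ℝ := mean ν - mean μ with hLdef
  have hgid : ∀ k, g k = Ccall μ k - Ccall ν k + L := by
    intro k
    have h1 := pput_eq_ccall μ hμ k
    have h2 := pput_eq_ccall ν hν k
    simp only [hgdef, hLdef]
    rw [h1, h2, hmass]; ring
  have hbp : BddAbove (range g) := bddAbove_of_pos_iSup hp
  have hbc : BddAbove (range fun k => Ccall μ k - Ccall ν k) := bddAbove_of_pos_iSup hc
  have hgle : ∀ k, g k ≤ pconst μ ν := fun k => le_ciSup hbp k
  have hcle : ∀ k, Ccall μ k - Ccall ν k ≤ cconst μ ν := fun k => le_ciSup hbc k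
  have hpc : cconst μ ν = pconst μ ν - L := by
    apply le_antisymm
    · refine ciSup_le fun k => ?_
      have := hgle k
      rw [hgid k] at this
      linarith
    · rw [sub_le_iff_le_add]
      refine ciSup_le fun k => ?_
      have h2 := hcle k
      have h3 := hgid k
      simp only [hgdef] at h3 ⊢
      linarith
  have hLp : L < pconst μ ν := by linarith
  have hgc : Continuous g := (continuous_pput μ hμ).sub (continuous_pput ν hν)
  have hbot : Tendsto g atBot (𝓝 0) := by
    have := (tendsto_pput_atBot μ hμ).sub (tendsto_pput_atBot ν hν)
    simpa using this
  have htop : Tendsto g atTop (𝓝 L) := by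
    have h1 := ((tendsto_ccall_atTop μ hμ).sub (tendsto_ccall_atTop ν hν)).add_const L
    have : (fun k => Ccall μ k - Ccall ν k + L) = g := funext fun k => (hgid k).symm
    rw [this] at h1
    simpa using h1
  set q : ℝ := max 0 L + (pconst μ ν - max 0 L) / 2 with hqdef
  have hmaxlt : max 0 L < pconst μ ν := max_lt hp hLp
  have hq1 : max 0 L < q := by simp only [hqdef]; linarith
  have hq2 : q < pconst μ ν := by simp only [hqdef]; linarith
  have h0q : (0:ℝ) < q := lt_of_le_of_lt (le_max_left _ _) hq1
  have hLq : L < q := lt_of_le_of_lt (le_max_right _ _) hq1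
  obtain ⟨A, hA⟩ := eventually_atBot.mp (hbot.eventually_lt_const h0q)
  obtain ⟨B, hB⟩ := eventually_atTop.mp (htop.eventually_lt_const hLq)
  set lo := min A B
  set hi := max A B
  have houts : ∀ k, k ∉ Icc lo hi → g k < q := by
    intro k hk
    rw [mem_Icc, not_and_or] at hk
    rcases hk with hk | hk
    · exact hA k (le_of_lt (lt_of_lt_of_le (not_le.mp hk) (min_le_left _ _)))
    · exact hB k (le_of_lt (lt_of_le_of_lt (le_max_right _ _) (not_le.mp hk)))
  obtain ⟨k₀, hk₀mem, hk₀max⟩ := (isCompact_Icc (a := lo) (b := hi)).exists_isMaxOn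
    ⟨lo, by simp only [mem_Icc]; exact ⟨le_refl _, min_le_max⟩⟩ hgc.continuousOn
  have hk0 : g k₀ = pconst μ ν := by
    refine le_antisymm (hgle k₀) ?_
    by_contra hlt
    push_neg at hlt
    have hub : ∀ k, g k ≤ max (g k₀) q := by
      intro k
      by_cases hk : k ∈ Icc lo hi
      · exact le_trans (hk₀max hk) (le_max_left _ _)
      · exact le_trans (houts k hk).le (le_max_right _ _)
    have : pconst μ ν ≤ max (g k₀) q := ciSup_le hub
    have : pconst μ ν < pconst μ ν := lt_of_le_of_lt this (max_lt hlt hq2)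
    exact lt_irrefl _ this
  set S : Set ℝ := {k | Pput ν k + pconst μ ν = Pput μ k} with hSdef
  have hSg : ∀ k, k ∈ S ↔ g k = pconst μ ν := by
    intro k
    simp only [hSdef, mem_setOf_eq, hgdef]
    constructor <;> intro h <;> linarith
  have hSne : S.Nonempty := ⟨k₀, (hSg k₀).mpr hk0⟩
  have hSclosed : IsClosed S :=
    isClosed_eq ((continuous_pput ν hν).add continuous_const) (continuous_pput μ hμ)
  have hSsub : S ⊆ Icc lo hi := by
    intro k hk
    by_contra hmem
    have := houts k hmem
    rw [(hSg k).mp hk] at this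
    exact lt_irrefl _ (lt_trans hq2 this)
  have hSbb : BddBelow S := ⟨lo, fun k hk => (hSsub hk).1⟩
  have hSba : BddAbove S := ⟨hi, fun k hk => (hSsub hk).2⟩
  have hxm : xminus μ ν ∈ S := hSclosed.csInf_mem hSne hSbb
  have hxp : xplus μ ν ∈ S := hSclosed.csSup_mem hSne hSba
  exact ⟨hxm, hxp, csInf_le_csSup hSne hSbb hSba, hgle, hpc⟩

end Aux16
namespace Aux16

lemma lip1_dist {T : ℝ → ℝ} (hT : LipschitzWith 1 T) (x y : ℝ) : |T x - T y| ≤ |x - y| := by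
  have := hT.dist_le_mul x y
  simpa [Real.dist_eq] using this

lemma partB {u v : ℝ} (huv : u ≤ v) {Tm Tp That : ℝ → ℝ}
    (hTm1 : Monotone Tm) (hTm2 : LipschitzWith 1 Tm)
    (hTp1 : Monotone Tp) (hTp2 : LipschitzWith 1 Tp)
    (hTmb : ∀ x, x < u → x ≤ Tm x ∧ Tm x ≤ u)
    (hTpb : ∀ x, v < x → v ≤ Tp x ∧ Tp x ≤ x)
    (hThat : ∀ x, That x = if x < u then Tm x else if x ≤ v then x else Tp x) :
    Monotone That ∧ LipschitzWith 1 That := by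
  have key : ∀ x y, x ≤ y → That x ≤ That y ∧ That y - That x ≤ y - x := by
    intro x y hxy
    rw [hThat x, hThat y]
    by_cases hx1 : x < u
    · rcases hTmb x hx1 with ⟨hx2, hx3⟩
      by_cases hy1 : y < u
      · rcases hTmb y hy1 with ⟨hy2, hy3⟩
        simp only [if_pos hx1, if_pos hy1]
        exact ⟨hTm1 hxy, by have := (abs_sub_le_iff.mp (lip1_dist hTm2 y x)).1; rw [abs_of_nonneg (by linarith : (0:ℝ) ≤ y - x)] at this; linarith⟩
      · push_neg at hy1
        by_cases hy2 : y ≤ v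
        · simp only [if_pos hx1, if_neg (not_lt.mpr hy1), if_pos hy2]
          exact ⟨le_trans hx3 hy1, by linarith⟩
        · push_neg at hy2
          rcases hTpb y hy2 with ⟨hy3, hy4⟩
          simp only [if_pos hx1, if_neg (not_lt.mpr hy1), if_neg (not_le.mpr hy2)]
          exact ⟨le_trans hx3 (le_trans huv hy3), by linarith⟩
    · push_neg at hx1
      have hy1 : ¬ (y < u) := not_lt.mpr (le_trans hx1 hxy)
      by_cases hx2 : x ≤ v
      · by_cases hy2 : y ≤ v
        · simp only [if_neg (not_lt.mpr hx1), if_pos hx2, if_neg hy1, if_pos hy2]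
          exact ⟨hxy, by linarith⟩
        · push_neg at hy2
          rcases hTpb y hy2 with ⟨hy3, hy4⟩
          simp only [if_neg (not_lt.mpr hx1), if_pos hx2, if_neg hy1, if_neg (not_le.mpr hy2)]
          exact ⟨le_trans hx2 hy3, by linarith⟩
      · push_neg at hx2
        rcases hTpb x hx2 with ⟨hx3, hx4⟩
        have hy2 : ¬ (y ≤ v) := not_le.mpr (lt_of_lt_of_le hx2 hxy)
        simp only [if_neg (not_lt.mpr hx1), if_neg (not_le.mpr hx2), if_neg hy1, if_neg hy2]
        exact ⟨hTp1 hxy, by have := (abs_sub_le_iff.mp (lip1_dist hTp2 y x)).1; rw [abs_of_nonneg (by linarith : (0:ℝ) ≤ y - x)] at this; linarith⟩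
  constructor
  · exact fun x y hxy => (key x y hxy).1
  · refine LipschitzWith.of_dist_le_mul fun x y => ?_
    rcases le_total x y with h | h
    · rcases key x y h with ⟨h1, h2⟩
      rw [Real.dist_eq, Real.dist_eq, NNReal.coe_one, one_mul, abs_of_nonpos (by linarith),
        abs_of_nonpos (by linarith)]
      linarith
    · rcases key y x h with ⟨h1, h2⟩
      rw [Real.dist_eq, Real.dist_eq, NNReal.coe_one, one_mul, abs_of_nonneg (by linarith),
        abs_of_nonneg (by linarith)]
      linarith

end Aux16
namespace Aux16
open Topology

lemma ae_mem_of_null_compl {lam : Measure ℝ} {s : Set ℝ} (hs : lam sᶜ = 0) :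
    ∀ᵐ x ∂lam, x ∈ s := by
  rw [ae_iff]
  simpa [Set.compl_def] using hs

lemma integrable_of_null_compl {lam : Measure ℝ} [IsFiniteMeasure lam] {u v : ℝ}
    (hs : lam (Icc u v)ᶜ = 0) {h : ℝ → ℝ} (hh : Continuous h) : Integrable h lam := by
  obtain ⟨C, hC⟩ := (isCompact_Icc (a := u) (b := v)).exists_bound_of_continuousOn
    hh.continuousOn
  refine Integrable.mono' (integrable_const C) hh.aestronglyMeasurable ?_
  filter_upwards [ae_mem_of_null_compl hs] with x hx
  exact hC x hx

set_option maxHeartbeats 2000000 in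
lemma crux {u v : ℝ} (huv : u ≤ v) (lam rho : Measure ℝ)
    [IsFiniteMeasure lam] [IsFiniteMeasure rho]
    (hls : lam (Icc u v)ᶜ = 0) (hrs : rho (Icc u v)ᶜ = 0)
    (hmass : (lam univ).toReal = (rho univ).toReal)
    (hmean : ∫ x, x ∂lam = ∫ x, x ∂rho)
    (hpot : ∀ t, u < t → t < v → ∫ x, max (x - t) 0 ∂lam ≤ ∫ x, max (x - t) 0 ∂rho)
    {f : ℝ → ℝ} (hf : ConvexOn ℝ univ f) (hfc : Continuous f) :
    ∫ x, f x ∂lam ≤ ∫ x, f x ∂rho := by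
  rcases eq_or_lt_of_le huv with heq | huv'
  · -- degenerate case u = v
    subst heq
    have h1 : ∫ x, f x ∂lam = (lam univ).toReal * f u := by
      have : f =ᵐ[lam] fun _ => f u := by
        filter_upwards [ae_mem_of_null_compl hls] with x hx
        rw [Icc_self, mem_singleton_iff] at hx
        rw [hx]
      rw [integral_congr_ae this, integral_const, smul_eq_mul, measureReal_def]
    have h2 : ∫ x, f x ∂rho = (rho univ).toReal * f u := by
      have : f =ᵐ[rho] fun _ => f u := by
        filter_upwards [ae_mem_of_null_compl hrs] with x hx
        rw [Icc_self, mem_singleton_iff] at hx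
        rw [hx]
      rw [integral_congr_ae this, integral_const, smul_eq_mul, measureReal_def]
    rw [h1, h2, hmass]
  · -- main case u < v
    have hm0 : 0 ≤ (lam univ).toReal := ENNReal.toReal_nonneg
    have hmr0 : 0 ≤ (rho univ).toReal := ENNReal.toReal_nonneg
    refine le_of_forall_pos_le_add fun ε hε => ?_
    set m := (lam univ).toReal
    set mr := (rho univ).toReal
    set ε' : ℝ := ε / (m + mr + 1) with hε'def
    have hε'pos : 0 < ε' := div_pos hε (by linarith)
    -- uniform continuity
    have huc := (isCompact_Icc (a := u) (b := v)).uniformContinuousOn_of_continuous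
      hfc.continuousOn
    rw [Metric.uniformContinuousOn_iff] at huc
    obtain ⟨δ, hδpos, hδ⟩ := huc ε' hε'pos
    -- choose n
    set n : ℕ := ⌈(v - u) / δ⌉₊ + 1 with hndef
    have hn1 : 1 ≤ n := Nat.le_add_left 1 _
    have hnpos : (0:ℝ) < n := by positivity
    set h : ℝ := (v - u) / n with hhdef
    have hh0 : 0 < h := div_pos (by linarith) hnpos
    have hhδ : h < δ := by
      rw [hhdef, div_lt_iff₀ hnpos]
      have h1 : (v - u) / δ < n := by
        calc (v - u) / δ ≤ (⌈(v - u) / δ⌉₊ : ℝ) := Nat.le_ceil _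
          _ < n := by rw [hndef]; push_cast; linarith
      calc v - u = ((v - u) / δ) * δ := by field_simp
        _ < n * δ := by
            exact mul_lt_mul_of_pos_right h1 hδpos
        _ = δ * n := mul_comm _ _
    set t : ℕ → ℝ := fun i => u + i * h with htdef
    have ht0 : t 0 = u := by simp [htdef]
    have htn : t n = v := by
      rw [htdef, hhdef]
      field_simp
      ring
    have hts : ∀ i : ℕ, t (i + 1) - t i = h := by
      intro i
      simp only [htdef]
      push_cast
      ring
    have htmono : ∀ i j : ℕ, i ≤ j → t i ≤ t j := by
      intro i j hij
      simp only [htdef]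
      have : (i:ℝ) ≤ j := Nat.cast_le.mpr hij
      nlinarith
    have htlt : ∀ i j : ℕ, i < j → t i < t j := by
      intro i j hij
      simp only [htdef]
      have : (i:ℝ) < j := Nat.cast_lt.mpr hij
      nlinarith
    set s : ℕ → ℝ := fun i => (f (t (i + 1)) - f (t i)) / h with hsdef
    have hslope : ∀ i : ℕ, s i = slope f (t i) (t (i + 1)) := by
      intro i
      rw [slope_def_field, hts i]
    have hsmono : ∀ i : ℕ, s i ≤ s (i + 1) := by
      intro i
      have hne1 : t i ∈ (univ : Set ℝ) \ {t (i + 1)} :=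
        ⟨mem_univ _, by simp [(htlt i (i+1) (by omega)).ne]⟩
      have hne2 : t (i + 2) ∈ (univ : Set ℝ) \ {t (i + 1)} :=
        ⟨mem_univ _, by simp [(htlt (i+1) (i+2) (by omega)).ne']⟩
      have key := hf.slope_mono (mem_univ (t (i + 1))) hne1 hne2 (htmono i (i + 2) (by omega))
      rw [slope_comm] at key
      rw [hslope i, hslope (i + 1)]
      exact key
    have hchord : ∀ j : ℕ, ∀ x : ℝ,
        f u + s 0 * (x - u) + ∑ i ∈ Finset.Ico 1 (j + 1), (s i - s (i - 1)) * (x - t i)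
          = f (t j) + s j * (x - t j) := by
      intro j
      induction j with
      | zero =>
        intro x
        simp [ht0]
      | succ j ih =>
        intro x
        rw [Finset.sum_Ico_succ_top (by omega : 1 ≤ j + 1)]
        have hidx : j + 1 - 1 = j := by omega
        rw [hidx]
        have h1 : s j * h = f (t (j + 1)) - f (t j) := div_mul_cancel₀ _ hh0.ne'
        have h2 : t (j + 1) = t j + h := by have := hts j; linarith
        calc f u + s 0 * (x - u)
              + (∑ i ∈ Finset.Ico 1 (j + 1), (s i - s (i - 1)) * (x - t i)
                + (s (j + 1) - s j) * (x - t (j + 1)))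
            = (f u + s 0 * (x - u) + ∑ i ∈ Finset.Ico 1 (j + 1), (s i - s (i - 1)) * (x - t i))
              + (s (j + 1) - s j) * (x - t (j + 1)) := by ring
          _ = f (t j) + s j * (x - t j) + (s (j + 1) - s j) * (x - t (j + 1)) := by rw [ih]
          _ = f (t j) + s j * h + s (j + 1) * (x - t (j + 1)) := by rw [h2]; ring
          _ = f (t (j + 1)) + s (j + 1) * (x - t (j + 1)) := by rw [h1]; ring
    set F : ℝ → ℝ := fun x =>
      f u + s 0 * (x - u) + ∑ i ∈ Finset.Ico 1 n, (s i - s (i - 1)) * max (x - t i) 0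
      with hFdef
    have hFval : ∀ j : ℕ, j < n → ∀ x : ℝ, t j ≤ x → x ≤ t (j + 1) →
        F x = f (t j) + s j * (x - t j) := by
      intro j hj x hx1 hx2
      have hsplit : ∑ i ∈ Finset.Ico 1 (j + 1), (s i - s (i - 1)) * max (x - t i) 0
          + ∑ i ∈ Finset.Ico (j + 1) n, (s i - s (i - 1)) * max (x - t i) 0
          = ∑ i ∈ Finset.Ico 1 n, (s i - s (i - 1)) * max (x - t i) 0 :=
        Finset.sum_Ico_consecutive _ (by omega) (by omega)
      have h1 : ∑ i ∈ Finset.Ico 1 (j + 1), (s i - s (i - 1)) * max (x - t i) 0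
          = ∑ i ∈ Finset.Ico 1 (j + 1), (s i - s (i - 1)) * (x - t i) := by
        refine Finset.sum_congr rfl fun i hi => ?_
        rw [Finset.mem_Ico] at hi
        have : t i ≤ x := le_trans (htmono i j (by omega)) hx1
        rw [max_eq_left (by linarith)]
      have h2 : ∑ i ∈ Finset.Ico (j + 1) n, (s i - s (i - 1)) * max (x - t i) 0 = 0 := by
        refine Finset.sum_eq_zero fun i hi => ?_
        rw [Finset.mem_Ico] at hi
        have : x ≤ t i := le_trans hx2 (htmono (j + 1) i hi.1)
        rw [max_eq_right (by linarith), mul_zero]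
      simp only [hFdef]
      rw [← hsplit, h1, h2, add_zero, hchord j x]
    have hFapprox : ∀ x ∈ Icc u v, |F x - f x| ≤ ε' := by
      intro x hx
      obtain ⟨hxu, hxv⟩ := hx
      set j0 : ℕ := ⌊(x - u) / h⌋₊ with hj0def
      set j : ℕ := min (n - 1) j0 with hjdef
      have hjn : j < n := lt_of_le_of_lt (min_le_left _ _) (by omega)
      have hdiv_nonneg : 0 ≤ (x - u) / h := div_nonneg (by linarith) hh0.le
      have hjle : (j : ℝ) ≤ (x - u) / h := by
        calc (j : ℝ) ≤ (j0 : ℝ) := Nat.cast_le.mpr (min_le_right _ _)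
          _ ≤ (x - u) / h := Nat.floor_le hdiv_nonneg
      have htjx : t j ≤ x := by
        have : (j : ℝ) * h ≤ (x - u) / h * h := mul_le_mul_of_nonneg_right hjle hh0.le
        rw [div_mul_cancel₀ _ hh0.ne'] at this
        simp only [htdef]
        linarith
      have hxtj1 : x ≤ t (j + 1) := by
        by_cases hcase : j0 ≤ n - 1
        · have hjj0 : j = j0 := min_eq_right hcase
          have := Nat.lt_floor_add_one ((x - u) / h)
          rw [← hj0def] at this
          have h3 : x - u < ((j0 : ℝ) + 1) * h := by
            rw [← div_lt_iff₀ hh0] at *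
            linarith
          simp only [htdef, hjj0]
          push_cast
          linarith
        · have hjn1 : j = n - 1 := min_eq_left (by omega)
          have : j + 1 = n := by omega
          rw [this, htn]
          exact hxv
      have htj1 : t (j + 1) = t j + h := by have := hts j; linarith
      have htju : u ≤ t j := by
        simp only [htdef]
        nlinarith [mul_nonneg (Nat.cast_nonneg j : (0:ℝ) ≤ (j:ℝ)) hh0.le]
      have htj1v : t (j + 1) ≤ v := by
        rw [← htn]
        exact htmono _ _ (by omega)
      have hmemj : t j ∈ Icc u v := ⟨htju, le_trans htjx hxv⟩
      have hmemj1 : t (j + 1) ∈ Icc u v := ⟨le_trans htju (by linarith), htj1v⟩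
      have hmemx : x ∈ Icc u v := ⟨hxu, hxv⟩
      have hd1 : |f (t j) - f x| ≤ ε' := by
        have := hδ (t j) hmemj x hmemx (by
          rw [Real.dist_eq, abs_of_nonpos (by linarith)]
          linarith)
        rw [Real.dist_eq] at this
        linarith
      have hd2 : |f (t (j + 1)) - f x| ≤ ε' := by
        have := hδ (t (j + 1)) hmemj1 x hmemx (by
          rw [Real.dist_eq, abs_of_nonneg (by linarith)]
          linarith)
        rw [Real.dist_eq] at this
        linarith
      set θ : ℝ := (x - t j) / h with hθdef
      have hθ0 : 0 ≤ θ := div_nonneg (by linarith) hh0.le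
      have hθ1 : θ ≤ 1 := by
        rw [hθdef, div_le_one hh0]
        linarith
      have hFx : F x - f x = (1 - θ) * (f (t j) - f x) + θ * (f (t (j + 1)) - f x) := by
        rw [hFval j hjn x htjx hxtj1]
        have hsj : s j * (x - t j) = (f (t (j + 1)) - f (t j)) * θ := by
          simp only [hsdef, hθdef]
          ring
        rw [hsj]
        ring
      rw [hFx]
      calc |(1 - θ) * (f (t j) - f x) + θ * (f (t (j + 1)) - f x)|
          ≤ |(1 - θ) * (f (t j) - f x)| + |θ * (f (t (j + 1)) - f x)| := abs_add_le _ _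
        _ = (1 - θ) * |f (t j) - f x| + θ * |f (t (j + 1)) - f x| := by
            rw [abs_mul, abs_mul, abs_of_nonneg (by linarith), abs_of_nonneg hθ0]
        _ ≤ (1 - θ) * ε' + θ * ε' := add_le_add
            (mul_le_mul_of_nonneg_left hd1 (by linarith))
            (mul_le_mul_of_nonneg_left hd2 hθ0)
        _ = ε' := by ring
    have hint : ∀ (κ : Measure ℝ) [IsFiniteMeasure κ], κ (Icc u v)ᶜ = 0 →
        ∫ x, F x ∂κ = (f u - s 0 * u) * (κ univ).toReal + s 0 * (∫ x, x ∂κ)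
          + ∑ i ∈ Finset.Ico 1 n, (s i - s (i - 1)) * (∫ x, max (x - t i) 0 ∂κ) := by
      intro κ _ hκ
      have hid : Integrable (fun x => x) κ := integrable_of_null_compl hκ continuous_id
      have hmax : ∀ i : ℕ, Integrable (fun x => max (x - t i) 0) κ := fun i =>
        integrable_of_null_compl hκ ((continuous_id.sub continuous_const).max continuous_const)
      have hsum_int : Integrable
          (fun x => ∑ i ∈ Finset.Ico 1 n, (s i - s (i - 1)) * max (x - t i) 0) κ :=
        integrable_finset_sum _ fun i _ => (hmax i).const_mul _
      have hlin_int : Integrable (fun x => f u - s 0 * u + s 0 * x) κ :=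
        (integrable_const _).add (hid.const_mul _)
      have hFeq : ∀ x : ℝ, F x = (f u - s 0 * u + s 0 * x)
          + ∑ i ∈ Finset.Ico 1 n, (s i - s (i - 1)) * max (x - t i) 0 := by
        intro x
        simp only [hFdef]
        ring
      calc ∫ x, F x ∂κ
          = ∫ x, ((f u - s 0 * u + s 0 * x)
              + ∑ i ∈ Finset.Ico 1 n, (s i - s (i - 1)) * max (x - t i) 0) ∂κ :=
            integral_congr_ae (Filter.Eventually.of_forall hFeq)
        _ = (∫ x, (f u - s 0 * u + s 0 * x) ∂κ)
              + ∫ x, (∑ i ∈ Finset.Ico 1 n, (s i - s (i - 1)) * max (x - t i) 0) ∂κ :=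
            integral_add hlin_int hsum_int
        _ = (f u - s 0 * u) * (κ univ).toReal + s 0 * (∫ x, x ∂κ)
              + ∑ i ∈ Finset.Ico 1 n, (s i - s (i - 1)) * (∫ x, max (x - t i) 0 ∂κ) := by
            rw [integral_add (integrable_const _) (hid.const_mul _), integral_const,
              integral_finset_sum _ fun i _ => (hmax i).const_mul _]
            have h1 : ∫ x, s 0 * x ∂κ = s 0 * ∫ x, x ∂κ := integral_const_mul _ _
            have h2 : ∀ i : ℕ, ∫ x, (s i - s (i - 1)) * max (x - t i) 0 ∂κ
                = (s i - s (i - 1)) * ∫ x, max (x - t i) 0 ∂κ := fun i =>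
              integral_const_mul _ _
            rw [h1, Finset.sum_congr rfl fun i _ => h2 i]
            simp only [smul_eq_mul, measureReal_def]
            ring
    have hFle : ∫ x, F x ∂lam ≤ ∫ x, F x ∂rho := by
      rw [hint lam hls, hint rho hrs, hmean,
        show (lam univ).toReal = (rho univ).toReal from hmass]
      have : ∀ i ∈ Finset.Ico 1 n, (s i - s (i - 1)) * (∫ x, max (x - t i) 0 ∂lam)
          ≤ (s i - s (i - 1)) * (∫ x, max (x - t i) 0 ∂rho) := by
        intro i hi
        rw [Finset.mem_Ico] at hi
        have hd : 0 ≤ s i - s (i - 1) := by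
          have := hsmono (i - 1)
          rw [Nat.sub_add_cancel hi.1] at this
          linarith
        refine mul_le_mul_of_nonneg_left ?_ hd
        refine hpot (t i) ?_ ?_
        · have := htlt 0 i hi.1
          rw [ht0] at this
          exact this
        · have := htlt i n hi.2
          rw [htn] at this
          exact this
      linarith [Finset.sum_le_sum this]
    -- conclude
    have hFc : Continuous F := by
      simp only [hFdef]
      exact (continuous_const.add (continuous_const.mul
        (continuous_id.sub continuous_const))).add
        (continuous_finset_sum _ fun i _ =>
          continuous_const.mul ((continuous_id.sub continuous_const).max continuous_const))
    have hfl : ∫ x, f x ∂lam ≤ ∫ x, F x ∂lam + ε' * m := by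
      have hae : ∀ᵐ x ∂lam, f x ≤ F x + ε' := by
        filter_upwards [ae_mem_of_null_compl hls] with x hx
        have := hFapprox x hx
        have h1 := abs_le.mp this
        linarith [h1.1]
      have h2 := integral_mono_ae (integrable_of_null_compl hls hfc)
        ((integrable_of_null_compl hls hFc).add (integrable_const ε')) hae
      simp only [Pi.add_apply] at h2
      rw [integral_add (integrable_of_null_compl hls hFc) (integrable_const ε'),
        integral_const] at h2
      have h3 : lam.real univ • ε' = ε' * m := by
        rw [smul_eq_mul]; exact mul_comm _ _
      rw [h3] at h2
      exact h2
    have hfr : ∫ x, F x ∂rho ≤ ∫ x, f x ∂rho + ε' * mr := by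
      have hae : ∀ᵐ x ∂rho, F x ≤ f x + ε' := by
        filter_upwards [ae_mem_of_null_compl hrs] with x hx
        have := hFapprox x hx
        have h1 := abs_le.mp this
        linarith [h1.2]
      have h2 := integral_mono_ae (integrable_of_null_compl hrs hFc)
        ((integrable_of_null_compl hrs hfc).add (integrable_const ε')) hae
      simp only [Pi.add_apply] at h2
      rw [integral_add (integrable_of_null_compl hrs hfc) (integrable_const ε'),
        integral_const] at h2
      have h3 : rho.real univ • ε' = ε' * mr := by
        rw [smul_eq_mul]; exact mul_comm _ _
      rw [h3] at h2
      exact h2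
    have hfin : ε' * m + ε' * mr ≤ ε := by
      have hpos : (0:ℝ) < m + mr + 1 := by linarith
      have h1 : ε' * (m + mr + 1) = ε := div_mul_cancel₀ _ hpos.ne'
      calc ε' * m + ε' * mr = ε' * (m + mr + 1) - ε' := by ring
        _ = ε - ε' := by rw [h1]
        _ ≤ ε := by linarith
    linarith

end Aux16
namespace Aux16

lemma put_restrict (η : Measure ℝ) (hη : MemM η) (k : ℝ) :
    ∫ x in Iio k, (k - x) ∂η = Pput η k := by
  haveI := hη.1
  have h0 : ∫ x in Iio k, max (k - x) 0 ∂η + ∫ x in (Iio k)ᶜ, max (k - x) 0 ∂η = Pput η k :=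
    integral_add_compl measurableSet_Iio (integrable_put η hη k)
  have h1 : ∫ x in (Iio k)ᶜ, max (k - x) 0 ∂η = 0 := by
    refine setIntegral_eq_zero_of_forall_eq_zero fun x hx => ?_
    rw [compl_Iio, mem_Ici] at hx
    exact max_eq_right (by linarith)
  have h2 : ∫ x in Iio k, max (k - x) 0 ∂η = ∫ x in Iio k, (k - x) ∂η := by
    refine setIntegral_congr_fun measurableSet_Iio fun x hx => ?_
    rw [mem_Iio] at hx
    exact max_eq_left (by linarith)
  rw [h2, h1] at h0
  linarith

lemma call_restrict (η : Measure ℝ) (hη : MemM η) (k : ℝ) :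
    ∫ x in Ioi k, (x - k) ∂η = Ccall η k := by
  haveI := hη.1
  have h0 : ∫ x in Iic k, max (x - k) 0 ∂η + ∫ x in (Iic k)ᶜ, max (x - k) 0 ∂η = Ccall η k :=
    integral_add_compl measurableSet_Iic (integrable_call η hη k)
  have h1 : ∫ x in Iic k, max (x - k) 0 ∂η = 0 := by
    refine setIntegral_eq_zero_of_forall_eq_zero fun x hx => ?_
    rw [mem_Iic] at hx
    exact max_eq_right (by linarith)
  have h2 : ∫ x in (Iic k)ᶜ, max (x - k) 0 ∂η = ∫ x in Ioi k, (x - k) ∂η := by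
    rw [compl_Iic]
    refine setIntegral_congr_fun measurableSet_Ioi fun x hx => ?_
    rw [mem_Ioi] at hx
    exact max_eq_left (by linarith)
  rw [h2, h1] at h0
  linarith

lemma setIntegral_id_iio (η : Measure ℝ) (hη : MemM η) (k : ℝ) :
    ∫ x in Iio k, x ∂η = k * (η (Iio k)).toReal - Pput η k := by
  haveI := hη.1
  have h1 : ∫ x in Iio k, (k - x) ∂η
      = k * (η (Iio k)).toReal - ∫ x in Iio k, x ∂η := by
    rw [integral_sub (integrableOn_const (C := k) (measure_ne_top _ _)) hη.2.integrableOn,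
      setIntegral_const, smul_eq_mul, measureReal_def]
    ring
  have h2 := put_restrict η hη k
  linarith

lemma setIntegral_id_ioi (η : Measure ℝ) (hη : MemM η) (k : ℝ) :
    ∫ x in Ioi k, x ∂η = k * (η (Ioi k)).toReal + Ccall η k := by
  haveI := hη.1
  have h1 : ∫ x in Ioi k, (x - k) ∂η
      = ∫ x in Ioi k, x ∂η - k * (η (Ioi k)).toReal := by
    rw [integral_sub hη.2.integrableOn (integrableOn_const (C := k) (measure_ne_top _ _)),
      setIntegral_const, smul_eq_mul, measureReal_def]
    ring
  have h2 := call_restrict η hη k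
  linarith

lemma triple_split (η : Measure ℝ) {u v : ℝ} (huv : u ≤ v) {G : ℝ → ℝ}
    (hG : Integrable G η) :
    ∫ x, G x ∂η = ∫ x in Iio u, G x ∂η + ∫ x in Icc u v, G x ∂η + ∫ x in Ioi v, G x ∂η := by
  have hset : Iio u ∪ Icc u v = Iic v := by
    ext x
    simp only [mem_union, mem_Iio, mem_Icc, mem_Iic]
    constructor
    · rintro (h | h)
      · linarith
      · exact h.2
    · intro h
      rcases lt_or_ge x u with h2 | h2
      · exact Or.inl h2
      · exact Or.inr ⟨h2, h⟩
  have h1 : ∫ x in Iic v, G x ∂η + ∫ x in (Iic v)ᶜ, G x ∂η = ∫ x, G x ∂η :=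
    integral_add_compl measurableSet_Iic hG
  have h2 : ∫ x in Iic v, G x ∂η = ∫ x in Iio u, G x ∂η + ∫ x in Icc u v, G x ∂η := by
    rw [← hset]
    refine setIntegral_union ?_ measurableSet_Icc hG.integrableOn hG.integrableOn
    rw [Set.disjoint_left]
    intro x hx1 hx2
    rw [mem_Iio] at hx1
    exact absurd hx2.1 (not_le.mpr hx1)
  rw [compl_Iic] at h1
  linarith

end Aux16
namespace Aux16

lemma integrable_dirac_of_cont {f : ℝ → ℝ} (a : ℝ) :
    Integrable f (Measure.dirac a) :=
  (integrable_const (f a)).congr (ae_eq_dirac f).symm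

end Aux16

set_option maxHeartbeats 4000000 in
theorem stmt_16 (μ ν : Measure ℝ) (hμ : MemM μ) (hν : MemM ν)
    (hmass : mass μ = mass ν)
    (hp : 0 < pconst μ ν) (hc : 0 < cconst μ ν)
    (Tm Tp : ℝ → ℝ)
    (hTm1 : Monotone Tm) (hTm2 : LipschitzWith 1 Tm)
    (hTp1 : Monotone Tp) (hTp2 : LipschitzWith 1 Tp)
    (hTmb : ∀ x, x < xminus μ ν → x ≤ Tm x ∧ Tm x ≤ xminus μ ν)
    (hTpb : ∀ x, xplus μ ν < x → xplus μ ν ≤ Tp x ∧ Tp x ≤ x)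
    (hTmpush : CxOrder ((etaMinus μ ν).map Tm) (chiMinus μ ν))
    (hTppush : CxOrder ((etaPlus μ ν).map Tp) (chiPlus μ ν))
    (That : ℝ → ℝ)
    (hThat : ∀ x, That x =
      if x < xminus μ ν then Tm x else if x ≤ xplus μ ν then x else Tp x) :
    Monotone That ∧ LipschitzWith 1 That ∧ CxOrder (μ.map That) ν := by
  classical
  obtain ⟨hPu, hPv, huv, hgle, hpc⟩ := Aux16.partA μ ν hμ hν hmass hp hc
  obtain ⟨hmono, hlip⟩ := Aux16.partB huv hTm1 hTm2 hTp1 hTp2 hTmb hTpb hThat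
  refine ⟨hmono, hlip, ?_⟩
  haveI hμf := hμ.1
  haveI hνf := hν.1
  set u := xminus μ ν with hudef
  set v := xplus μ ν with hvdef
  set a' : ENNReal := ENNReal.ofReal (leftD (Pput μ) u - leftD (Pput ν) u) with ha'def
  set b' : ENNReal := ENNReal.ofReal (rightD (Pput μ) v - rightD (Pput ν) v) with hb'def
  set a : ℝ := a'.toReal with hadef
  set b : ℝ := b'.toReal with hbdef
  have ha'top : a' ≠ ⊤ := ENNReal.ofReal_ne_top
  have hb'top : b' ≠ ⊤ := ENNReal.ofReal_ne_top
  have hchiM : chiMinus μ ν = ν.restrict (Iio u) + a' • Measure.dirac u := rfl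
  have hchiP : chiPlus μ ν = ν.restrict (Ioi v) + b' • Measure.dirac v := rfl
  have hetaM : etaMinus μ ν = μ.restrict (Iio u) := rfl
  have hetaP : etaPlus μ ν = μ.restrict (Ioi v) := rfl
  have hTm_meas : Measurable Tm := hTm1.measurable
  have hTp_meas : Measurable Tp := hTp1.measurable
  have hThat_meas : Measurable That := hmono.measurable
  -- finiteness instances
  haveI hfdm : IsFiniteMeasure (a' • Measure.dirac u) := by
    refine ⟨?_⟩
    rw [Measure.smul_apply, smul_eq_mul, measure_univ, mul_one]
    exact Ne.lt_top ha'top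
  haveI hfdp : IsFiniteMeasure (b' • Measure.dirac v) := by
    refine ⟨?_⟩
    rw [Measure.smul_apply, smul_eq_mul, measure_univ, mul_one]
    exact Ne.lt_top hb'top
  haveI : IsFiniteMeasure (chiMinus μ ν) := by rw [hchiM]; infer_instance
  haveI : IsFiniteMeasure (chiPlus μ ν) := by rw [hchiP]; infer_instance
  haveI : IsFiniteMeasure ((etaMinus μ ν).map Tm) := by
    rw [hetaM]; exact Measure.isFiniteMeasure_map _ _
  haveI : IsFiniteMeasure ((etaPlus μ ν).map Tp) := by
    rw [hetaP]; exact Measure.isFiniteMeasure_map _ _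
  -- masses of pieces
  have hmapM_univ : (((etaMinus μ ν).map Tm) univ).toReal = (μ (Iio u)).toReal := by
    rw [Measure.map_apply hTm_meas MeasurableSet.univ, preimage_univ, hetaM,
      Measure.restrict_apply_univ]
  have hmapP_univ : (((etaPlus μ ν).map Tp) univ).toReal = (μ (Ioi v)).toReal := by
    rw [Measure.map_apply hTp_meas MeasurableSet.univ, preimage_univ, hetaP,
      Measure.restrict_apply_univ]
  have hdiracu : Measure.dirac u univ = 1 := measure_univ
  have hdiracv : Measure.dirac v univ = 1 := measure_univ
  have hchiM_univ : ((chiMinus μ ν) univ).toReal = (ν (Iio u)).toReal + a := by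
    rw [hchiM, Measure.add_apply, Measure.restrict_apply_univ, Measure.smul_apply,
      smul_eq_mul, hdiracu, mul_one, ENNReal.toReal_add (measure_ne_top _ _) ha'top]
  have hchiP_univ : ((chiPlus μ ν) univ).toReal = (ν (Ioi v)).toReal + b := by
    rw [hchiP, Measure.add_apply, Measure.restrict_apply_univ, Measure.smul_apply,
      smul_eq_mul, hdiracv, mul_one, ENNReal.toReal_add (measure_ne_top _ _) hb'top]
  -- mass identities from the push-forward hypotheses applied to constants
  have hF1 : (μ (Iio u)).toReal = (ν (Iio u)).toReal + a := by
    have e1 := hTmpush (fun _ => (1:ℝ)) (convexOn_const _ convex_univ)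
      (integrable_const _) (integrable_const _)
    have e2 := hTmpush (fun _ => (-1:ℝ)) (convexOn_const _ convex_univ)
      (integrable_const _) (integrable_const _)
    rw [integral_const, integral_const, smul_eq_mul, smul_eq_mul, mul_one, mul_one,
      measureReal_def, measureReal_def, hmapM_univ, hchiM_univ] at e1
    rw [integral_const, integral_const, smul_eq_mul, smul_eq_mul,
      measureReal_def, measureReal_def, hmapM_univ, hchiM_univ] at e2
    have h2 : -( (μ (Iio u)).toReal) ≤ -((ν (Iio u)).toReal + a) := by
      simpa using e2
    linarith
  have hF2 : (μ (Ioi v)).toReal = (ν (Ioi v)).toReal + b := by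
    have e1 := hTppush (fun _ => (1:ℝ)) (convexOn_const _ convex_univ)
      (integrable_const _) (integrable_const _)
    have e2 := hTppush (fun _ => (-1:ℝ)) (convexOn_const _ convex_univ)
      (integrable_const _) (integrable_const _)
    rw [integral_const, integral_const, smul_eq_mul, smul_eq_mul, mul_one, mul_one,
      measureReal_def, measureReal_def, hmapP_univ, hchiP_univ] at e1
    rw [integral_const, integral_const, smul_eq_mul, smul_eq_mul,
      measureReal_def, measureReal_def, hmapP_univ, hchiP_univ] at e2
    have h2 : -( (μ (Ioi v)).toReal) ≤ -((ν (Ioi v)).toReal + b) := by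
      simpa using e2
    linarith
  -- mass splitting
  have hmass_split : ∀ (η : Measure ℝ), MemM η →
      (η univ).toReal = (η (Iio u)).toReal + (η (Icc u v)).toReal + (η (Ioi v)).toReal := by
    intro η hη
    haveI := hη.1
    have h1 := Aux16.triple_split η huv (G := fun _ => (1:ℝ)) (integrable_const _)
    rw [integral_const, setIntegral_const, setIntegral_const, setIntegral_const] at h1
    simpa [measureReal_def] using h1
  have hmsμ := hmass_split μ hμ
  have hmsν := hmass_split ν hν
  -- mean splitting
  have hmean_split : ∀ (η : Measure ℝ), MemM η →
      mean η = (u * (η (Iio u)).toReal - Pput η u) + (∫ x in Icc u v, x ∂η)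
        + (v * (η (Ioi v)).toReal + Ccall η v) := by
    intro η hη
    haveI := hη.1
    have h1 := Aux16.triple_split η huv (G := fun x => x) hη.2
    rw [Aux16.setIntegral_id_iio η hη u, Aux16.setIntegral_id_ioi η hη v] at h1
    exact h1
  have hmmμ := hmean_split μ hμ
  have hmmν := hmean_split ν hν
  -- put-call parity at relevant points
  have hpcμv := Aux16.pput_eq_ccall μ hμ v
  have hpcνv := Aux16.pput_eq_ccall ν hν v
  have hmassμ_eq : mass μ = (μ univ).toReal := rfl
  have hmassν_eq : mass ν = (ν univ).toReal := rfl
  have hmass' : (μ univ).toReal = (ν univ).toReal := by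
    rw [← hmassμ_eq, ← hmassν_eq]; exact hmass
  have hvmass : v * mass μ = v * mass ν := by rw [hmass]
  have humem : u ∈ Icc u v := ⟨le_refl _, huv⟩
  have hvmem : v ∈ Icc u v := ⟨huv, le_refl _⟩
  haveI : IsFiniteMeasure
      (μ.restrict (Icc u v) + a' • Measure.dirac u + b' • Measure.dirac v) := by
    infer_instance
  have hls : (μ.restrict (Icc u v) + a' • Measure.dirac u + b' • Measure.dirac v)
      (Icc u v)ᶜ = 0 := by
    rw [Measure.add_apply, Measure.add_apply,
      Measure.restrict_apply measurableSet_Icc.compl, compl_inter_self,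
      Measure.smul_apply, Measure.smul_apply,
      Measure.dirac_apply' _ measurableSet_Icc.compl,
      Measure.dirac_apply' _ measurableSet_Icc.compl]
    rw [indicator_of_notMem (by simpa using humem),
      indicator_of_notMem (by simpa using hvmem)]
    simp
  have hrs : (ν.restrict (Icc u v)) (Icc u v)ᶜ = 0 := by
    rw [Measure.restrict_apply measurableSet_Icc.compl, compl_inter_self, measure_empty]
  -- now the convex test function
  intro f hconv hi1 hi2
  have hfc : Continuous f := by
    rw [← continuousOn_univ]
    exact ConvexOn.continuousOn isOpen_univ hconv
  have hfThat : Integrable (fun x => f (That x)) μ := by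
    have := (integrable_map_measure hfc.aestronglyMeasurable hThat_meas.aemeasurable).mp hi1
    exact this
  -- expansion of integrals against the middle measure
  have hlam_exp : ∀ (G : ℝ → ℝ), Continuous G →
      ∫ x, G x ∂(μ.restrict (Icc u v) + a' • Measure.dirac u + b' • Measure.dirac v)
        = ∫ x in Icc u v, G x ∂μ + a * G u + b * G v := by
    intro G hG
    have hG1 : Integrable G (μ.restrict (Icc u v)) := by
      refine Aux16.integrable_of_null_compl (u := u) (v := v) ?_ hG
      rw [Measure.restrict_apply measurableSet_Icc.compl, compl_inter_self, measure_empty]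
    have hG2 : Integrable G (a' • Measure.dirac u) :=
      (Aux16.integrable_dirac_of_cont u).smul_measure ha'top
    have hG3 : Integrable G (b' • Measure.dirac v) :=
      (Aux16.integrable_dirac_of_cont v).smul_measure hb'top
    rw [integral_add_measure (hG1.add_measure hG2) hG3,
      integral_add_measure hG1 hG2, integral_smul_measure, integral_smul_measure,
      integral_dirac, integral_dirac, smul_eq_mul, smul_eq_mul]
  -- crux hypotheses
  have hmass_crux : ((μ.restrict (Icc u v) + a' • Measure.dirac u + b' • Measure.dirac v)
      univ).toReal = ((ν.restrict (Icc u v)) univ).toReal := by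
    have h1 := hlam_exp (fun _ => (1:ℝ)) continuous_const
    rw [integral_const, setIntegral_const] at h1
    simp only [smul_eq_mul, mul_one, measureReal_def] at h1
    rw [h1, Measure.restrict_apply_univ]
    linarith [hmass', hmsμ, hmsν, hF1, hF2]
  have hmean_crux :
      ∫ x, x ∂(μ.restrict (Icc u v) + a' • Measure.dirac u + b' • Measure.dirac v)
        = ∫ x, x ∂(ν.restrict (Icc u v)) := by
    rw [hlam_exp (fun x => x) continuous_id]
    have hgoal : ∫ x in Icc u v, x ∂μ + a * u + b * v = ∫ x in Icc u v, x ∂ν := by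
      have hprodu : u * (μ (Iio u)).toReal = u * (ν (Iio u)).toReal + a * u := by
        rw [hF1]; ring
      have hprodv : v * (μ (Ioi v)).toReal = v * (ν (Ioi v)).toReal + b * v := by
        rw [hF2]; ring
      linarith [hmmμ, hmmν, hPu, hPv, hprodu, hprodv, hpcμv, hpcνv, hvmass]
    exact hgoal
  have hpot_crux : ∀ t, u < t → t < v →
      ∫ x, max (x - t) 0
        ∂(μ.restrict (Icc u v) + a' • Measure.dirac u + b' • Measure.dirac v)
      ≤ ∫ x, max (x - t) 0 ∂(ν.restrict (Icc u v)) := by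
    intro t h1 h2
    have hGc : Continuous (fun x => max (x - t) 0) :=
      (continuous_id.sub continuous_const).max continuous_const
    rw [hlam_exp _ hGc]
    have hmu : max (u - t) 0 = 0 := max_eq_right (by linarith)
    have hmv : max (v - t) 0 = v - t := max_eq_left (by linarith)
    rw [hmu, hmv, mul_zero, add_zero]
    have hmid : ∀ (η : Measure ℝ), MemM η →
        ∫ x in Icc u v, max (x - t) 0 ∂η
          = Ccall η t - (v - t) * (η (Ioi v)).toReal - Ccall η v := by
      intro η hη
      haveI := hη.1
      have hsplit : ∫ x, max (x - t) 0 ∂η = ∫ x in Iio u, max (x - t) 0 ∂η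
          + ∫ x in Icc u v, max (x - t) 0 ∂η + ∫ x in Ioi v, max (x - t) 0 ∂η :=
        Aux16.triple_split η huv (Aux16.integrable_call η hη t)
      have hz : ∫ x in Iio u, max (x - t) 0 ∂η = 0 := by
        refine setIntegral_eq_zero_of_forall_eq_zero fun x hx => ?_
        rw [mem_Iio] at hx
        exact max_eq_right (by linarith)
      have hoi : ∫ x in Ioi v, max (x - t) 0 ∂η
          = ∫ x in Ioi v, x ∂η - t * (η (Ioi v)).toReal := by
        have hcongr : ∫ x in Ioi v, max (x - t) 0 ∂η = ∫ x in Ioi v, (x - t) ∂η := by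
          refine setIntegral_congr_fun measurableSet_Ioi fun x hx => ?_
          rw [mem_Ioi] at hx
          exact max_eq_left (by linarith)
        rw [hcongr, integral_sub hη.2.integrableOn
          (integrableOn_const (C := t) (measure_ne_top _ _)), setIntegral_const,
          smul_eq_mul, measureReal_def, mul_comm]
      have hct : Ccall η t = ∫ x, max (x - t) 0 ∂η := rfl
      rw [hz, hoi, Aux16.setIntegral_id_ioi η hη v] at hsplit
      rw [hct, hsplit]
      ring
    rw [hmid μ hμ, hmid ν hν]
    have hpcμt := Aux16.pput_eq_ccall μ hμ t
    have hpcνt := Aux16.pput_eq_ccall ν hν t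
    have hgt := hgle t
    have htmass : t * mass μ = t * mass ν := by rw [hmass]
    have hprod : (v - t) * (μ (Ioi v)).toReal
        = (v - t) * (ν (Ioi v)).toReal + (v - t) * b := by rw [hF2]; ring
    linarith [hgt, hprod, hpcμt, hpcνt, htmass, hPv, hpcμv, hpcνv, hvmass]
  have hcrux := Aux16.crux huv
    (μ.restrict (Icc u v) + a' • Measure.dirac u + b' • Measure.dirac v)
    (ν.restrict (Icc u v)) hls hrs hmass_crux hmean_crux hpot_crux hconv hfc
  have hcrux' : ∫ x in Icc u v, f x ∂μ + a * f u + b * f v ≤ ∫ x in Icc u v, f x ∂ν := by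
    rw [hlam_exp f hfc] at hcrux
    exact hcrux
  -- minus part
  have hiTm : Integrable f ((etaMinus μ ν).map Tm) := by
    rw [integrable_map_measure hfc.aestronglyMeasurable hTm_meas.aemeasurable, hetaM]
    have h1 : Integrable (fun x => f (That x)) (μ.restrict (Iio u)) := hfThat.restrict
    refine h1.congr ?_
    refine (ae_restrict_iff' measurableSet_Iio).mpr (Filter.Eventually.of_forall fun x hx => ?_)
    rw [mem_Iio] at hx
    show f (That x) = (f ∘ Tm) x
    rw [hThat x, if_pos hx]
    rfl
  have hiχm : Integrable f (chiMinus μ ν) := by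
    rw [hchiM]
    exact hi2.restrict.add_measure ((Aux16.integrable_dirac_of_cont u).smul_measure ha'top)
  have hineq_m := hTmpush f hconv hiTm hiχm
  have hml : ∫ x, f x ∂((etaMinus μ ν).map Tm) = ∫ x in Iio u, f (Tm x) ∂μ := by
    rw [hetaM, integral_map hTm_meas.aemeasurable hfc.aestronglyMeasurable]
  have hmr : ∫ x, f x ∂(chiMinus μ ν) = ∫ x in Iio u, f x ∂ν + a * f u := by
    rw [hchiM, integral_add_measure hi2.restrict
      ((Aux16.integrable_dirac_of_cont u).smul_measure ha'top),
      integral_smul_measure, integral_dirac, smul_eq_mul]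
  rw [hml, hmr] at hineq_m
  -- plus part
  have hiTp : Integrable f ((etaPlus μ ν).map Tp) := by
    rw [integrable_map_measure hfc.aestronglyMeasurable hTp_meas.aemeasurable, hetaP]
    have h1 : Integrable (fun x => f (That x)) (μ.restrict (Ioi v)) := hfThat.restrict
    refine h1.congr ?_
    refine (ae_restrict_iff' measurableSet_Ioi).mpr (Filter.Eventually.of_forall fun x hx => ?_)
    rw [mem_Ioi] at hx
    show f (That x) = (f ∘ Tp) x
    rw [hThat x, if_neg (not_lt.mpr (le_trans huv hx.le)), if_neg (not_le.mpr hx)]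
    rfl
  have hiχp : Integrable f (chiPlus μ ν) := by
    rw [hchiP]
    exact hi2.restrict.add_measure ((Aux16.integrable_dirac_of_cont v).smul_measure hb'top)
  have hineq_p := hTppush f hconv hiTp hiχp
  have hpl : ∫ x, f x ∂((etaPlus μ ν).map Tp) = ∫ x in Ioi v, f (Tp x) ∂μ := by
    rw [hetaP, integral_map hTp_meas.aemeasurable hfc.aestronglyMeasurable]
  have hpr : ∫ x, f x ∂(chiPlus μ ν) = ∫ x in Ioi v, f x ∂ν + b * f v := by
    rw [hchiP, integral_add_measure hi2.restrict
      ((Aux16.integrable_dirac_of_cont v).smul_measure hb'top),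
      integral_smul_measure, integral_dirac, smul_eq_mul]
  rw [hpl, hpr] at hineq_p
  -- final assembly
  have hmain : ∫ x, f x ∂(μ.map That) = ∫ x in Iio u, f (Tm x) ∂μ
      + ∫ x in Icc u v, f x ∂μ + ∫ x in Ioi v, f (Tp x) ∂μ := by
    rw [integral_map hThat_meas.aemeasurable hfc.aestronglyMeasurable,
      Aux16.triple_split μ huv hfThat]
    congr 1
    · congr 1
      · refine setIntegral_congr_fun measurableSet_Iio fun x hx => ?_
        rw [mem_Iio] at hx
        rw [hThat x, if_pos hx]
      · refine setIntegral_congr_fun measurableSet_Icc fun x hx => ?_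
        rw [hThat x, if_neg (not_lt.mpr hx.1), if_pos hx.2]
    · refine setIntegral_congr_fun measurableSet_Ioi fun x hx => ?_
      rw [mem_Ioi] at hx
      rw [hThat x, if_neg (not_lt.mpr (le_trans huv hx.le)), if_neg (not_le.mpr hx)]
  have hνsplit := Aux16.triple_split ν huv hi2
  rw [hmain, hνsplit]
  linarith

end
end

section
/- Let μ, ν ∈ 𝓜 with μ(ℝ) = ν(ℝ) and min(p_{μ,ν}, c_{μ,ν}) > 0, and set P̃(k) := P_ν(k) + p_{μ,ν}. Then the set {k ∈ ℝ : P̃(k) = P_μ(k)} is nonempty and bounded; in particular x⁻ := inf{k : P̃(k) = P_μ(k)} and x⁺ := sup{k : P̃(k) = P_μ(k)} are real numbers with x⁻ ≤ x⁺, and P̃(x⁻) = P_μ(x⁻) and P̃(x⁺) = P_μ(x⁺). Moreover lim_{k→−∞}(P̃(k) − P_μ(k)) = p_{μ,ν} > 0 and lim_{k→+∞}(P̃(k) − P_μ(k)) = c_{μ,ν} > 0. -/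
open MeasureTheory Set Filter

noncomputable section

lemma integrable_putFn {η : Measure ℝ} (hη : MemM η) (k : ℝ) :
    Integrable (fun x => max (k - x) 0) η := by
  haveI := hη.1
  exact ((integrable_const k).sub hη.2).pos_part

lemma integrable_callFn {η : Measure ℝ} (hη : MemM η) (k : ℝ) :
    Integrable (fun x => max (x - k) 0) η := by
  haveI := hη.1
  exact (hη.2.sub (integrable_const k)).pos_part

lemma pput_lipschitz {η : Measure ℝ} (hη : MemM η) (k k' : ℝ) :
    |Pput η k - Pput η k'| ≤ mass η * |k - k'| := by
  haveI := hη.1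
  rw [Pput, Pput, ← integral_sub (integrable_putFn hη k) (integrable_putFn hη k')]
  calc |∫ x, (max (k - x) 0 - max (k' - x) 0) ∂η|
      ≤ ∫ x, |max (k - x) 0 - max (k' - x) 0| ∂η := by
        simpa [Real.norm_eq_abs] using
          norm_integral_le_integral_norm (fun x => max (k - x) 0 - max (k' - x) 0) (μ := η)
    _ ≤ ∫ x, |k - k'| ∂η := by
        apply integral_mono ((integrable_putFn hη k).sub (integrable_putFn hη k')).abs
          (integrable_const _)
        intro x
        have := abs_max_sub_max_le_abs (k - x) (k' - x) 0
        simpa using this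
    _ = mass η * |k - k'| := by rw [integral_const]; simp [mass, smul_eq_mul, Measure.real]

lemma pput_continuous {η : Measure ℝ} (hη : MemM η) : Continuous (Pput η) := by
  apply LipschitzWith.continuous (K := ⟨mass η, ENNReal.toReal_nonneg⟩)
  apply LipschitzWith.of_dist_le_mul
  intro k k'
  rw [Real.dist_eq, Real.dist_eq]
  exact pput_lipschitz hη k k'

lemma pput_tendsto_atBot {η : Measure ℝ} (hη : MemM η) :
    Tendsto (Pput η) atBot (nhds 0) := by
  haveI := hη.1
  have h0 : (0:ℝ) = ∫ (_ : ℝ), (0:ℝ) ∂η := (integral_zero _ _).symm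
  rw [h0]
  apply tendsto_integral_filter_of_dominated_convergence (fun x => |x|)
  · exact Eventually.of_forall fun k =>
      ((continuous_const.sub continuous_id).max continuous_const).aestronglyMeasurable
  · filter_upwards [eventually_le_atBot (0:ℝ)] with k hk
    apply Eventually.of_forall; intro x
    rw [Real.norm_eq_abs, abs_of_nonneg (le_max_right _ _)]
    refine max_le ?_ (abs_nonneg x)
    have := neg_abs_le x; linarith
  · exact hη.2.abs
  · apply Eventually.of_forall; intro x
    have h : (fun k => max (k - x) 0) =ᶠ[atBot] fun _ => (0:ℝ) := by
      filter_upwards [eventually_le_atBot x] with k hk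
      exact max_eq_right (by linarith)
    exact Tendsto.congr' h.symm tendsto_const_nhds

lemma ccall_tendsto_atTop {η : Measure ℝ} (hη : MemM η) :
    Tendsto (Ccall η) atTop (nhds 0) := by
  haveI := hη.1
  have h0 : (0:ℝ) = ∫ (_ : ℝ), (0:ℝ) ∂η := (integral_zero _ _).symm
  rw [h0]
  apply tendsto_integral_filter_of_dominated_convergence (fun x => |x|)
  · exact Eventually.of_forall fun k =>
      ((continuous_id.sub continuous_const).max continuous_const).aestronglyMeasurable
  · filter_upwards [eventually_ge_atTop (0:ℝ)] with k hk
    apply Eventually.of_forall; intro x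
    rw [Real.norm_eq_abs, abs_of_nonneg (le_max_right _ _)]
    refine max_le ?_ (abs_nonneg x)
    have := le_abs_self x; linarith
  · exact hη.2.abs
  · apply Eventually.of_forall; intro x
    have h : (fun k => max (x - k) 0) =ᶠ[atTop] fun _ => (0:ℝ) := by
      filter_upwards [eventually_ge_atTop x] with k hk
      exact max_eq_right (by linarith)
    exact Tendsto.congr' h.symm tendsto_const_nhds

lemma parity {η : Measure ℝ} (hη : MemM η) (k : ℝ) :
    Ccall η k - Pput η k = mean η - mass η * k := by
  haveI := hη.1
  rw [Ccall, Pput, ← integral_sub (integrable_callFn hη k) (integrable_putFn hη k)]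
  have h : ∀ x : ℝ, max (x - k) 0 - max (k - x) 0 = x - k := by
    intro x
    rcases le_total x k with h | h
    · rw [max_eq_right (by linarith), max_eq_left (by linarith)]; ring
    · rw [max_eq_left (by linarith), max_eq_right (by linarith)]; ring
  simp_rw [h]
  rw [integral_sub hη.2 (integrable_const k), integral_const, mean]
  simp [mass, smul_eq_mul, Measure.real]

lemma pput_sub_bound {μ ν : Measure ℝ} (hμ : MemM μ) (hν : MemM ν)
    (hmass : mass μ = mass ν) (k : ℝ) :
    |Pput μ k - Pput ν k| ≤ (∫ x, |x| ∂μ) + ∫ x, |x| ∂ν := by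
  have key : ∀ (η : Measure ℝ), MemM η →
      |∫ x, (max (k - x) 0 - max k 0) ∂η| ≤ ∫ x, |x| ∂η := by
    intro η hη
    haveI := hη.1
    calc |∫ x, (max (k - x) 0 - max k 0) ∂η|
        ≤ ∫ x, |max (k - x) 0 - max k 0| ∂η := by
          simpa [Real.norm_eq_abs] using
            norm_integral_le_integral_norm (fun x => max (k - x) 0 - max k 0) (μ := η)
      _ ≤ ∫ x, |x| ∂η := by
          apply integral_mono ((integrable_putFn hη k).sub (integrable_const _)).abs hη.2.abs
          intro x
          have := abs_max_sub_max_le_abs (k - x) k 0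
          simpa using this
  have heq : ∀ (η : Measure ℝ), MemM η →
      ∫ x, (max (k - x) 0 - max k 0) ∂η = Pput η k - mass η * max k 0 := by
    intro η hη
    haveI := hη.1
    rw [integral_sub (integrable_putFn hη k) (integrable_const _), integral_const, Pput]
    simp [mass, smul_eq_mul, Measure.real]
  have h1 := key μ hμ; have h2 := key ν hν
  rw [heq μ hμ] at h1; rw [heq ν hν] at h2
  calc |Pput μ k - Pput ν k|
      = |(Pput μ k - mass μ * max k 0) - (Pput ν k - mass ν * max k 0)| := by
        rw [hmass]; ring_nf
    _ ≤ |Pput μ k - mass μ * max k 0| + |Pput ν k - mass ν * max k 0| := abs_sub _ _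
    _ ≤ (∫ x, |x| ∂μ) + ∫ x, |x| ∂ν := add_le_add h1 h2


theorem stmt_19 (μ ν : Measure ℝ) (hμ : MemM μ) (hν : MemM ν)
    (hmass : mass μ = mass ν)
    (hp : 0 < pconst μ ν) (hc : 0 < cconst μ ν) :
    {k | Pput ν k + pconst μ ν = Pput μ k}.Nonempty ∧
    BddBelow {k | Pput ν k + pconst μ ν = Pput μ k} ∧
    BddAbove {k | Pput ν k + pconst μ ν = Pput μ k} ∧
    xminus μ ν ≤ xplus μ ν ∧
    Pput ν (xminus μ ν) + pconst μ ν = Pput μ (xminus μ ν) ∧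
    Pput ν (xplus μ ν) + pconst μ ν = Pput μ (xplus μ ν) ∧
    Tendsto (fun k => Pput ν k + pconst μ ν - Pput μ k) atBot (nhds (pconst μ ν)) ∧
    Tendsto (fun k => Pput ν k + pconst μ ν - Pput μ k) atTop (nhds (cconst μ ν)) := by
  have hgdef : ∀ k, (fun k => Pput μ k - Pput ν k) k = Pput μ k - Pput ν k := fun _ => rfl
  set g : ℝ → ℝ := fun k => Pput μ k - Pput ν k with hg_def
  have hpg : pconst μ ν = ⨆ k, g k := rfl
  have hcg : cconst μ ν = ⨆ k, (Ccall μ k - Ccall ν k) := rfl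
  set M := (∫ x, |x| ∂μ) + ∫ x, |x| ∂ν with hM
  have hgM : ∀ k, |g k| ≤ M := fun k => pput_sub_bound hμ hν hmass k
  have hbdd : BddAbove (Set.range g) := ⟨M, by
    rintro _ ⟨k, rfl⟩; exact (le_abs_self _).trans (hgM k)⟩
  have hle : ∀ k, g k ≤ pconst μ ν := fun k => le_ciSup hbdd k
  have hg_cont : Continuous g := (pput_continuous hμ).sub (pput_continuous hν)
  have h_bot : Tendsto g atBot (nhds 0) := by
    have := (pput_tendsto_atBot hμ).sub (pput_tendsto_atBot hν)
    simpa using this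
  have hrel : ∀ k, g k = (Ccall μ k - Ccall ν k) - (mean μ - mean ν) := by
    intro k
    have h1 := parity hμ k
    have h2 := parity hν k
    have hgk : g k = Pput μ k - Pput ν k := rfl
    rw [hmass] at h1
    rw [hgk]; linarith
  have h_top : Tendsto g atTop (nhds (mean ν - mean μ)) := by
    have h := (ccall_tendsto_atTop hμ).sub (ccall_tendsto_atTop hν)
    have h' : Tendsto (fun k => (Ccall μ k - Ccall ν k) - (mean μ - mean ν)) atTop
        (nhds ((0:ℝ) - (mean μ - mean ν))) := by
      exact (by simpa using h : Tendsto (fun k => Ccall μ k - Ccall ν k) atTop (nhds 0)).sub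
        tendsto_const_nhds
    have he : (0:ℝ) - (mean μ - mean ν) = mean ν - mean μ := by ring
    rw [he] at h'
    exact h'.congr fun k => (hrel k).symm
  have hc_eq : cconst μ ν = pconst μ ν + (mean μ - mean ν) := by
    have hcb : BddAbove (Set.range fun k => Ccall μ k - Ccall ν k) := by
      refine ⟨M + (mean μ - mean ν), ?_⟩
      rintro _ ⟨k, rfl⟩
      have h1 := hrel k
      have h2 := (le_abs_self (g k)).trans (hgM k)
      dsimp only; linarith
    apply le_antisymm
    · rw [hcg]
      apply ciSup_le
      intro k
      have h1 := hrel k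
      have h2 := hle k
      linarith
    · have hall : ∀ k, g k + (mean μ - mean ν) ≤ cconst μ ν := by
        intro k
        have h1 := hrel k
        have h2 : Ccall μ k - Ccall ν k ≤ cconst μ ν := le_ciSup hcb k
        linarith
      have hp' : pconst μ ν ≤ cconst μ ν - (mean μ - mean ν) := by
        rw [hpg]
        exact ciSup_le fun k => by linarith [hall k]
      linarith
  set T := pconst μ ν - min (pconst μ ν) (cconst μ ν) / 2 with hT
  have hminpos : 0 < min (pconst μ ν) (cconst μ ν) := lt_min hp hc
  have hTp : T < pconst μ ν := by rw [hT]; linarith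
  have hT0 : 0 < T := by
    have h1 : min (pconst μ ν) (cconst μ ν) ≤ pconst μ ν := min_le_left _ _
    rw [hT]; linarith
  have hTtop : mean ν - mean μ < T := by
    have h1 : min (pconst μ ν) (cconst μ ν) ≤ cconst μ ν := min_le_right _ _
    rw [hT]; linarith
  obtain ⟨a, ha⟩ := eventually_atBot.mp (h_bot.eventually_lt_const hT0)
  obtain ⟨b, hb⟩ := eventually_atTop.mp (h_top.eventually_lt_const hTtop)
  obtain ⟨k₀, hk₀⟩ := exists_lt_of_lt_ciSup (show T < ⨆ k, g k from hpg ▸ hTp)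
  set a' := min a k₀ with ha'
  set b' := max b k₀ with hb'
  have hk₀mem : k₀ ∈ Icc a' b' := ⟨min_le_right _ _, le_max_right _ _⟩
  obtain ⟨z, hz, hzmax⟩ := isCompact_Icc.exists_isMaxOn ⟨k₀, hk₀mem⟩ hg_cont.continuousOn
  have hout : ∀ k, k ∉ Icc a' b' → g k < T := by
    intro k hk
    simp only [mem_Icc, not_and_or, not_le] at hk
    rcases hk with h | h
    · exact ha k (le_of_lt (lt_of_lt_of_le h (min_le_left _ _)))
    · exact hb k (le_of_lt (lt_of_le_of_lt (le_max_left _ _) h))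
  have hzT : T < g z := lt_of_lt_of_le hk₀ (hzmax hk₀mem)
  have hgz : g z = pconst μ ν := by
    refine le_antisymm (hle z) ?_
    rw [hpg]
    refine ciSup_le fun k => ?_
    by_cases hkmem : k ∈ Icc a' b'
    · exact hzmax hkmem
    · exact le_of_lt (lt_trans (hout k hkmem) hzT)
  have hSmem : ∀ k, (Pput ν k + pconst μ ν = Pput μ k) ↔ g k = pconst μ ν := by
    intro k
    have hgk : g k = Pput μ k - Pput ν k := rfl
    constructor <;> intro h <;> [rw [hgk]; rw [hgk] at h] <;> linarith
  have hne : {k | Pput ν k + pconst μ ν = Pput μ k}.Nonempty :=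
    ⟨z, (hSmem z).mpr hgz⟩
  have hBB : BddBelow {k | Pput ν k + pconst μ ν = Pput μ k} := by
    refine ⟨a, fun k hk => ?_⟩
    by_contra hak
    push_neg at hak
    have h1 : g k = pconst μ ν := (hSmem k).mp hk
    have h2 : g k < T := ha k (le_of_lt hak)
    linarith
  have hBA : BddAbove {k | Pput ν k + pconst μ ν = Pput μ k} := by
    refine ⟨b, fun k hk => ?_⟩
    by_contra hbk
    push_neg at hbk
    have h1 : g k = pconst μ ν := (hSmem k).mp hk
    have h2 : g k < T := hb k (le_of_lt hbk)
    linarith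
  have hScl : IsClosed {k | Pput ν k + pconst μ ν = Pput μ k} :=
    isClosed_eq ((pput_continuous hν).add continuous_const) (pput_continuous hμ)
  have hinf : xminus μ ν ∈ {k | Pput ν k + pconst μ ν = Pput μ k} :=
    hScl.csInf_mem hne hBB
  have hsup : xplus μ ν ∈ {k | Pput ν k + pconst μ ν = Pput μ k} :=
    hScl.csSup_mem hne hBA
  refine ⟨hne, hBB, hBA, csInf_le_csSup hne hBB hBA, hinf, hsup, ?_, ?_⟩
  · have h1 : Tendsto (fun k => pconst μ ν - g k) atBot (nhds (pconst μ ν - 0)) :=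
      tendsto_const_nhds.sub h_bot
    rw [sub_zero] at h1
    exact h1.congr fun k => by
      have hgk : g k = Pput μ k - Pput ν k := rfl
      rw [hgk]; ring
  · have h1 : Tendsto (fun k => pconst μ ν - g k) atTop
        (nhds (pconst μ ν - (mean ν - mean μ))) := tendsto_const_nhds.sub h_top
    have h2 : pconst μ ν - (mean ν - mean μ) = cconst μ ν := by rw [hc_eq]; ring
    rw [h2] at h1
    exact h1.congr fun k => by
      have hgk : g k = Pput μ k - Pput ν k := rfl
      rw [hgk]; ring

end
end
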